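/- Let ℓ_1,…,ℓ_k be pairwise non-proportional nonzero linear forms in S = ℝ[x,y,z] with dual points X = (p_1,…,p_k), and let d > r ≥ 0 be integers. If d < α̂(X)·(d − r), then every homogeneous polynomial of degree d belongs to the ideal ⟨ℓ_1^{r+1},…,ℓ_k^{r+1}⟩. -/

import Mathlib

open MvPolynomial

noncomputable section

/-- The polynomial ring `S = ℝ[x,y,z]`. -/
abbrev S3 : Type := MvPolynomial (Fin 3) ℝ

/-- The linear form with coefficient vector `p`, i.e. `p 0 • x + p 1 • y + p 2 • z`;
`p` is the dual point of this linear form. -/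
def linForm (p : Fin 3 → ℝ) : S3 := ∑ i, MvPolynomial.C (p i) * MvPolynomial.X i

/-- Iterated partial derivative along a list of coordinate directions, as a linear map. -/
def diffOp (L : List (Fin 3)) : S3 →ₗ[ℝ] S3 :=
  L.foldr (fun i f => (MvPolynomial.pderiv (R := ℝ) i).toLinearMap ∘ₗ f) LinearMap.id

/-- `F` vanishes to order `≥ s` at the point `p`: every iterated partial derivative of
total order at most `s - 1` vanishes at `p`. -/
def VanishesToOrder (F : S3) (p : Fin 3 → ℝ) (s : ℕ) : Prop :=
  ∀ L : List (Fin 3), L.length < s → MvPolynomial.eval p (diffOp L F) = 0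

/-- The subspace of polynomials vanishing to order `≥ s` at `p`. -/
def vanishSubmodule (p : Fin 3 → ℝ) (s : ℕ) : Submodule ℝ S3 :=
  ⨅ L ∈ {L : List (Fin 3) | L.length < s},
    LinearMap.ker ((MvPolynomial.aeval p).toLinearMap ∘ₗ diffOp L)

/-- Dimension of the degree-`d` graded piece of an ideal of `S`. -/
def idealDim (I : Ideal S3) (d : ℕ) : ℕ :=
  Module.finrank ℝ
    ↥(I.restrictScalars ℝ ⊓ MvPolynomial.homogeneousSubmodule (Fin 3) ℝ d)

/-- Dimension of the space of degree-`d` homogeneous polynomials vanishing to order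
`≥ m i` at each point `p i`. -/
def fatDim {k : ℕ} (p : Fin k → (Fin 3 → ℝ)) (m : Fin k → ℕ) (d : ℕ) : ℕ :=
  Module.finrank ℝ
    ↥(MvPolynomial.homogeneousSubmodule (Fin 3) ℝ d ⊓ ⨅ i, vanishSubmodule (p i) (m i))

/-- A list of vectors of `ℝ³` is pairwise non-proportional and nonzero. -/
def PairwiseNonProp {k : ℕ} (p : Fin k → (Fin 3 → ℝ)) : Prop :=
  (∀ i, p i ≠ 0) ∧ ∀ i j, i ≠ j → ∀ c : ℝ, p j ≠ c • p i

/-- `α_s(X)`: least degree of a nonzero homogeneous polynomial vanishing to order `≥ s`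
at every point of the list `X`. -/
def alphaDeg {k : ℕ} (p : Fin k → (Fin 3 → ℝ)) (s : ℕ) : ℕ :=
  sInf {d : ℕ | ∃ F : S3, F ≠ 0 ∧ F.IsHomogeneous d ∧ ∀ i, VanishesToOrder F (p i) s}

/-- The Waldschmidt constant `α̂(X) = inf { α_s(X)/s : s ≥ 1 }`. -/
def waldschmidt {k : ℕ} (p : Fin k → (Fin 3 → ℝ)) : ℝ :=
  sInf {x : ℝ | ∃ s : ℕ, 1 ≤ s ∧ x = (alphaDeg p s : ℝ) / (s : ℝ)}

/-- Integer binomial coefficient `C(m, 2)`, zero for `m < 2`. -/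
def choose2 (m : ℤ) : ℤ := if m < 2 then 0 else m * (m - 1) / 2

/-!
Under the apolarity pairing `⟨F, G⟩ = ∑ α! F_α G_α` multiplication by `X i` is adjoint to
`∂/∂X i`, and Euler's identity gives `⟨ℓ_q ^ e, H⟩ = e! H(q)` for `H` of degree `e`. So if a form
`G` of degree `d` is orthogonal to the degree-`d` part of `⟨ℓ_i ^ (r+1)⟩`, then for `|L| < d - r`
we get `(∂_L G)(p_i) = ⟨ℓ_i ^ (d - |L|) X^L, G⟩ / (d - |L|)! = 0`: `G` vanishes to order `d - r`
at every `p_i`, whence `α̂(X) (d - r) ≤ α_{d-r}(X) ≤ d`. If the ideal missed a form of degree `d`,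
a dimension count would produce a nonzero such `G`.
-/

open Finset
open scoped Nat

theorem LinearMap.exists_mem_ne_zero_forall_apply_eq_zero_of_finrank_lt {K M N : Type*} [Field K]
    [AddCommGroup M] [Module K M] [AddCommGroup N] [Module K N] (B : M →ₗ[K] N →ₗ[K] K)
    {U : Submodule K M} {V : Submodule K N} [FiniteDimensional K U]
    (hUV : Module.finrank K U < Module.finrank K V) :
    ∃ G ∈ V, G ≠ 0 ∧ ∀ u ∈ U, B u G = 0 := by
  let restrict : V →ₗ[K] Module.Dual K U := LinearMap.domRestrict' U ∘ₗ B.flip ∘ₗ V.subtype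
  have hker : LinearMap.ker restrict ≠ ⊥ := fun hbot => by
    have := LinearMap.finrank_le_finrank_of_injective (LinearMap.ker_eq_bot.mp hbot)
    rw [Subspace.dual_finrank_eq] at this
    omega
  obtain ⟨⟨G, hGV⟩, hGker, hG0⟩ := (Submodule.ne_bot_iff _).mp hker
  refine ⟨G, hGV, fun h => hG0 (Subtype.ext h), fun u hu => ?_⟩
  exact LinearMap.congr_fun (LinearMap.mem_ker.mp hGker) ⟨u, hu⟩

namespace MvPolynomial

variable {σ R : Type*} [CommSemiring R]

theorem isHomogeneous_prod_X (L : List σ) :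
    ((L.map X).prod : MvPolynomial σ R).IsHomogeneous L.length := by
  induction L with
  | nil => simpa using isHomogeneous_one σ R
  | cons i T ih => simpa [add_comm] using (isHomogeneous_X R i).mul ih

variable [Fintype σ]

theorem prod_factorial_add_single (β : σ →₀ ℕ) (i : σ) :
    ∏ j, ((β + Finsupp.single i 1 : σ →₀ ℕ) j)! = (β i + 1) * ∏ j, (β j)! := by
  classical
  rw [← mul_prod_erase _ _ (mem_univ i), ← mul_prod_erase _ _ (mem_univ i),
    prod_congr rfl fun j hj => by
      rw [Finsupp.add_apply, Finsupp.single_eq_of_ne (ne_of_mem_erase hj), add_zero]]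
  simp [Nat.factorial_succ, mul_assoc]

variable (σ R) in
/-- The apolarity pairing `⟨F, G⟩ = ∑ α! F_α G_α`, where `α! = ∏ i, (α i)!`. -/
def apolarPairing : MvPolynomial σ R →ₗ[R] MvPolynomial σ R →ₗ[R] R :=
  (basisMonomials σ R).constr R fun α => ((∏ i, (α i)! : ℕ) : R) • lcoeff R α

theorem apolarPairing_monomial (α : σ →₀ ℕ) (a : R) (G : MvPolynomial σ R) :
    apolarPairing σ R (monomial α a) G = a * (∏ i, (α i)! : ℕ) * coeff α G := by
  rw [show monomial α a = a • basisMonomials σ R α by simp [coe_basisMonomials, smul_monomial],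
    map_smul, apolarPairing, Module.Basis.constr_basis]
  simp [mul_assoc]

theorem apolarPairing_mul_X (F G : MvPolynomial σ R) (i : σ) :
    apolarPairing σ R (F * X i) G = apolarPairing σ R F (pderiv i G) := by
  induction F using MvPolynomial.induction_on' with
  | add F₁ F₂ ih₁ ih₂ => simp only [add_mul, map_add, LinearMap.add_apply, ih₁, ih₂]
  | monomial β b =>
    rw [X, monomial_mul, mul_one, apolarPairing_monomial, apolarPairing_monomial, coeff_pderiv,
      prod_factorial_add_single]
    push_cast
    ring

theorem IsHomogeneous.sum_mul_eval_pderiv {H : MvPolynomial σ R} {n : ℕ}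
    (hH : H.IsHomogeneous n) (q : σ → R) :
    ∑ i, q i * eval q (pderiv i H) = n * eval q H := by
  simpa [map_sum, nsmul_eq_mul] using congrArg (eval q) hH.sum_X_mul_pderiv

theorem apolarPairing_sum_C_mul_X_pow (q : σ → R) {e : ℕ} {H : MvPolynomial σ R}
    (hH : H.IsHomogeneous e) :
    apolarPairing σ R ((∑ i, C (q i) * X i) ^ e) H = e ! * eval q H := by
  induction e generalizing H with
  | zero =>
    obtain ⟨c, rfl⟩ : ∃ c, H = C c :=
      ⟨_, totalDegree_eq_zero_iff_eq_C.mp ((totalDegree_zero_iff_isHomogeneous σ).mpr hH)⟩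
    rw [pow_zero, ← C_1, C_apply, apolarPairing_monomial]
    simp
  | succ e ih =>
    calc apolarPairing σ R ((∑ i, C (q i) * X i) ^ (e + 1)) H
        = ∑ i, q i * apolarPairing σ R ((∑ i, C (q i) * X i) ^ e * X i) H := by
          have hpow : (∑ i, C (q i) * X i) ^ (e + 1) =
              ∑ i, q i • ((∑ i, C (q i) * X i) ^ e * X i) := by
            simp only [pow_succ, mul_sum, smul_eq_C_mul]
            exact sum_congr rfl fun i _ => by ring
          simp only [hpow, map_sum, map_smul, LinearMap.sum_apply, LinearMap.smul_apply,
            smul_eq_mul]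
      _ = e ! * ∑ i, q i * eval q (pderiv i H) := by
          simp only [apolarPairing_mul_X, ih hH.pderiv, mul_sum]
          exact sum_congr rfl fun i _ => by ring
      _ = (e + 1)! * eval q H := by
          rw [hH.sum_mul_eval_pderiv, Nat.factorial_succ]
          push_cast
          ring

instance {K : Type*} [Field K] [Finite σ] (n : ℕ) :
    FiniteDimensional K (homogeneousSubmodule σ K n) :=
  Submodule.finiteDimensional_of_le fun _ hF =>
    (mem_restrictTotalDegree _ _ _).mpr ((mem_homogeneousSubmodule _ _).mp hF).totalDegree_le

end MvPolynomial

theorem diffOp_cons (i : Fin 3) (L : List (Fin 3)) (G : S3) :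
    diffOp (i :: L) G = pderiv i (diffOp L G) := rfl

theorem apolarPairing_mul_prod_X (L : List (Fin 3)) (F G : S3) :
    apolarPairing (Fin 3) ℝ (F * (L.map X).prod) G =
      apolarPairing (Fin 3) ℝ F (diffOp L G) := by
  induction L generalizing F with
  | nil => simp [diffOp]
  | cons i T ih =>
    rw [List.map_cons, List.prod_cons, ← mul_assoc, ih, apolarPairing_mul_X, diffOp_cons]

theorem isHomogeneous_diffOp (L : List (Fin 3)) {n : ℕ} {H : S3} (hH : H.IsHomogeneous n) :
    (diffOp L H).IsHomogeneous (n - L.length) := by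
  induction L with
  | nil => exact hH
  | cons i T ih => simpa [diffOp_cons, Nat.sub_add_eq] using ih.pderiv (i := i)

theorem isHomogeneous_linForm (q : Fin 3 → ℝ) : (linForm q).IsHomogeneous 1 :=
  IsHomogeneous.sum _ _ _ fun i _ => isHomogeneous_C_mul_X (q i) i

theorem vanishesToOrder_of_forall_apolarPairing_eq_zero {q : Fin 3 → ℝ} {G : S3} {r d : ℕ}
    (hG : G.IsHomogeneous d)
    (horth : ∀ u ∈ Ideal.span {linForm q ^ (r + 1)}, u.IsHomogeneous d →
      apolarPairing (Fin 3) ℝ u G = 0) :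
    VanishesToOrder G q (d - r) := by
  intro L hL
  have hmem : linForm q ^ (d - L.length) * (L.map X).prod ∈ Ideal.span {linForm q ^ (r + 1)} :=
    Ideal.mem_span_singleton.mpr ((pow_dvd_pow _ (by omega)).mul_right _)
  have hhom : (linForm q ^ (d - L.length) * (L.map X).prod).IsHomogeneous d := by
    simpa [show d - L.length + L.length = d by omega] using
      ((isHomogeneous_linForm q).pow (d - L.length)).mul (isHomogeneous_prod_X L)
  have h := horth _ hmem hhom
  rw [apolarPairing_mul_prod_X, linForm,
    apolarPairing_sum_C_mul_X_pow q (isHomogeneous_diffOp L hG)] at h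
  exact (mul_eq_zero.mp h).resolve_left (by positivity)

theorem waldschmidt_mul_le_alphaDeg {k : ℕ} (p : Fin k → Fin 3 → ℝ) {s : ℕ} (hs : 1 ≤ s) :
    waldschmidt p * s ≤ alphaDeg p s := by
  have hbdd : BddBelow {x : ℝ | ∃ s : ℕ, 1 ≤ s ∧ x = (alphaDeg p s : ℝ) / (s : ℝ)} :=
    ⟨0, by rintro x ⟨s, -, rfl⟩; positivity⟩
  rw [← le_div_iff₀ (by exact_mod_cast hs)]
  exact csInf_le hbdd ⟨s, hs, rfl⟩

theorem statement12_general {k : ℕ} (p : Fin k → (Fin 3 → ℝ))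
    (r d : ℕ) (hrd : r < d)
    (hW : (d : ℝ) < waldschmidt p * ((d : ℝ) - (r : ℝ))) :
    ∀ F : S3, F.IsHomogeneous d →
      F ∈ Ideal.span (Set.range fun i => linForm (p i) ^ (r + 1)) := by
  intro F hF
  set I := Ideal.span (Set.range fun i => linForm (p i) ^ (r + 1))
  set V := homogeneousSubmodule (Fin 3) ℝ d
  suffices hVI : V ≤ I.restrictScalars ℝ from hVI ((mem_homogeneousSubmodule _ _).mpr hF)
  by_contra hVI
  have hlt : Module.finrank ℝ ↥(I.restrictScalars ℝ ⊓ V) < Module.finrank ℝ V :=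
    Submodule.finrank_lt_finrank_of_lt (inf_le_right.lt_of_ne fun h => hVI (h ▸ inf_le_left))
  obtain ⟨G, hGV, hG0, horth⟩ :=
    LinearMap.exists_mem_ne_zero_forall_apply_eq_zero_of_finrank_lt (apolarPairing (Fin 3) ℝ) hlt
  have hG : G.IsHomogeneous d := (mem_homogeneousSubmodule _ _).mp hGV
  have hvan : ∀ i, VanishesToOrder G (p i) (d - r) := fun i =>
    vanishesToOrder_of_forall_apolarPairing_eq_zero hG fun u hu hu_hom =>
      horth u <| Submodule.mem_inf.mpr
        ⟨Ideal.span_mono (Set.singleton_subset_iff.mpr (Set.mem_range_self i)) hu,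
          (mem_homogeneousSubmodule _ _).mpr hu_hom⟩
  have hαd : alphaDeg p (d - r) ≤ d := Nat.sInf_le ⟨G, hG0, hG, hvan⟩
  have hWα := waldschmidt_mul_le_alphaDeg p (s := d - r) (by omega)
  rw [Nat.cast_sub hrd.le] at hWα
  have hαd' : (alphaDeg p (d - r) : ℝ) ≤ d := by exact_mod_cast hαd
  linarith

/-- for pairwise non-proportional nonzero linear forms with dual points
`X = (p 1, …, p k)` and `d > r ≥ 0`, if `d < α̂(X)·(d − r)` then every homogeneous
polynomial of degree `d` belongs to `⟨ℓ₁^{r+1}, …, ℓ_k^{r+1}⟩`. -/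
theorem statement12 {k : ℕ} (p : Fin k → (Fin 3 → ℝ)) (hp : PairwiseNonProp p)
    (r d : ℕ) (hrd : r < d)
    (hW : (d : ℝ) < waldschmidt p * ((d : ℝ) - (r : ℝ))) :
    ∀ F : S3, F.IsHomogeneous d →
      F ∈ Ideal.span (Set.range fun i => linForm (p i) ^ (r + 1)) :=
  statement12_general p r d hrd hW

end
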